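/- Let R : ℝ^n → ℝ ∪ {+∞} be proper convex lower semi-continuous and A ∈ ℝ^{p×n} have full column rank. Then for each w ∈ ℝ^p and γ > 0, the generalized proximal problem min_x γR(x) + ½‖Ax − w‖² has a unique minimizer x̂ = prox^A_{γR}(w), and the map w ↦ prox^A_{γR}(w) is Lipschitz continuous with constant ‖A‖/κ, where κ > 0 is the smallest eigenvalue of AᵀA. -/

import Mathlib

/-!
On the effective domain of `R` the objective is a real convex function plus `½‖Ax − w‖²`.
Comparing a minimizer `x̂` with the points of the segment towards any `y`, and letting them tend
to `x̂`, gives the variational inequality `γ (R y − R x̂) + ⟪Ax̂ − w, A(y − x̂)⟫ ≥ 0`. Adding the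
inequalities for data `w₁`, `w₂` yields `‖A(x̂₁ − x̂₂)‖² ≤ ⟪w₁ − w₂, A(x̂₁ − x̂₂)⟫`, hence
`‖A(x̂₁ − x̂₂)‖ ≤ ‖w₁ − w₂‖`. Injectivity of `A` gives uniqueness, and
`κ‖v‖² ≤ ‖Av‖² ≤ ‖Av‖ ‖w₁ − w₂‖ ≤ ‖A‖ ‖v‖ ‖w₁ − w₂‖` gives the Lipschitz bound.
For existence, `R` is minorized by `a − b‖x‖` (its minimum on a unit ball, propagated outwards
by convexity), so the lower semicontinuous objective tends to `+∞` and attains its minimum.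
-/

open Matrix

noncomputable def euclNorm {ι : Type*} [Fintype ι] (x : ι → ℝ) : ℝ :=
  Real.sqrt (∑ i, x i ^ 2)

noncomputable def matOpNorm {ι κ : Type*} [Fintype ι] [Fintype κ]
    (A : Matrix ι κ ℝ) : ℝ :=
  sSup {t : ℝ | ∃ x : κ → ℝ, euclNorm x ≤ 1 ∧ t = euclNorm (A.mulVec x)}

open Filter Topology
open scoped RealInnerProductSpace

theorem convexOn_toReal_of_ereal {E : Type*} [AddCommGroup E] [Module ℝ E] {R : E → EReal}
    (hR : ∀ x y : E, ∀ t : ℝ, t ∈ Set.Icc (0 : ℝ) 1 →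
        R (t • x + (1 - t) • y) ≤ (t : EReal) * R x + ((1 - t : ℝ) : EReal) * R y)
    (hbot : ∀ x, R x ≠ ⊥) :
    ConvexOn ℝ {x | R x ≠ ⊤} (fun x => (R x).toReal) := by
  have key : ∀ x ∈ {x | R x ≠ ⊤}, ∀ y ∈ {x | R x ≠ ⊤}, ∀ a b : ℝ, 0 ≤ a → 0 ≤ b → a + b = 1 →
      R (a • x + b • y) ≤ ((a * (R x).toReal + b * (R y).toReal : ℝ) : EReal) := by
    intro x hx y hy a b ha hb hab
    obtain rfl : b = 1 - a := by linarith
    refine (hR x y a ⟨ha, by linarith⟩).trans_eq ?_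
    rw [← EReal.coe_toReal hx (hbot x), ← EReal.coe_toReal hy (hbot y)]
    norm_cast
  refine ⟨fun x hx y hy a b ha hb hab => ?_, fun x hx y hy a b ha hb hab => ?_⟩
  · exact ne_top_of_le_ne_top (EReal.coe_ne_top _) (key x hx y hy a b ha hb hab)
  · have h := key x hx y hy a b ha hb hab
    rw [← EReal.coe_toReal (ne_top_of_le_ne_top (EReal.coe_ne_top _) h) (hbot _)] at h
    exact_mod_cast h

section Variational
variable {E F : Type*} [AddCommGroup E] [Module ℝ E] [NormedAddCommGroup F]
  [InnerProductSpace ℝ F] {s : Set E} {g : E → ℝ}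

theorem ConvexOn.variational_inequality (hg : ConvexOn ℝ s g) (T : E →ₗ[ℝ] F) {w : F} {x y : E}
    (hx : x ∈ s) (hy : y ∈ s) (hmin : IsMinOn (fun z => g z + 1 / 2 * ‖T z - w‖ ^ 2) s x) :
    0 ≤ g y - g x + ⟪T x - w, T y - T x⟫ := by
  set c := g y - g x + ⟪T x - w, T y - T x⟫
  have hsegment : ∀ t ∈ Set.Ioc (0 : ℝ) 1, 0 ≤ c + t / 2 * ‖T y - T x‖ ^ 2 := by
    rintro t ⟨ht0, ht1⟩
    have hz : (1 - t) • x + t • y ∈ s := hg.1 hx hy (by linarith) ht0.le (by ring)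
    have hgz := hg.2 hx hy (by linarith : 0 ≤ 1 - t) ht0.le (by ring)
    have hTz : T ((1 - t) • x + t • y) - w = (T x - w) + t • (T y - T x) := by
      rw [map_add, map_smul, map_smul]; module
    have hmin_z := hmin hz
    simp only [Set.mem_ofPred_eq, hTz, smul_eq_mul] at hmin_z hgz
    rw [norm_add_sq_real, inner_smul_right, norm_smul, mul_pow, Real.norm_eq_abs,
      sq_abs] at hmin_z
    have : 0 ≤ t * (c + t / 2 * ‖T y - T x‖ ^ 2) := by nlinarith
    exact (mul_nonneg_iff_of_pos_left ht0).1 this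
  have hlim : Tendsto (fun t : ℝ => c + t / 2 * ‖T y - T x‖ ^ 2) (𝓝[>] 0) (𝓝 c) := by
    have : Continuous (fun t : ℝ => c + t / 2 * ‖T y - T x‖ ^ 2) := by fun_prop
    simpa using (this.tendsto 0).mono_left nhdsWithin_le_nhds
  refine ge_of_tendsto hlim ?_
  filter_upwards [Ioc_mem_nhdsGT zero_lt_one] with t ht using hsegment t ht

theorem ConvexOn.norm_map_sub_le_of_isMinOn (hg : ConvexOn ℝ s g) (T : E →ₗ[ℝ] F)
    {w₁ w₂ : F} {x₁ x₂ : E} (hx₁ : x₁ ∈ s) (hx₂ : x₂ ∈ s)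
    (h₁ : IsMinOn (fun z => g z + 1 / 2 * ‖T z - w₁‖ ^ 2) s x₁)
    (h₂ : IsMinOn (fun z => g z + 1 / 2 * ‖T z - w₂‖ ^ 2) s x₂) :
    ‖T x₁ - T x₂‖ ≤ ‖w₁ - w₂‖ := by
  have hv₁ := hg.variational_inequality T hx₁ hx₂ h₁
  have hv₂ := hg.variational_inequality T hx₂ hx₁ h₂
  have hsum : ⟪T x₁ - w₁, T x₂ - T x₁⟫ + ⟪T x₂ - w₂, T x₁ - T x₂⟫
      = ⟪w₁ - w₂, T x₁ - T x₂⟫ - ‖T x₁ - T x₂‖ ^ 2 := by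
    rw [← neg_sub (T x₁) (T x₂), inner_neg_right, neg_add_eq_sub, ← inner_sub_left,
      ← real_inner_self_eq_norm_sq, ← inner_sub_left]
    congr 1
    abel
  have hd : ‖T x₁ - T x₂‖ ^ 2 ≤ ‖w₁ - w₂‖ * ‖T x₁ - T x₂‖ := by
    nlinarith [real_inner_le_norm (w₁ - w₂) (T x₁ - T x₂)]
  nlinarith [norm_nonneg (T x₁ - T x₂), norm_nonneg (w₁ - w₂)]
end Variational

section ProxObjective
variable {E F : Type*} [AddCommGroup E] [Module ℝ E] [NormedAddCommGroup F] [NormedSpace ℝ F]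

noncomputable def proxObjective (R : E → EReal) (γ : ℝ) (T : E →ₗ[ℝ] F) (w : F) (x : E) :
    EReal :=
  γ * R x + ((1 / 2 * ‖T x - w‖ ^ 2 : ℝ) : EReal)

variable {R : E → EReal} {γ : ℝ} {T : E →ₗ[ℝ] F} {w : F}

theorem proxObjective_eq_coe (hbot : ∀ x, R x ≠ ⊥) {x : E} (hx : R x ≠ ⊤) :
    proxObjective R γ T w x = ((γ * (R x).toReal + 1 / 2 * ‖T x - w‖ ^ 2 : ℝ) : EReal) := by
  rw [proxObjective, ← EReal.coe_toReal hx (hbot x)]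
  norm_cast

theorem isMinOn_of_forall_proxObjective_le (hbot : ∀ x, R x ≠ ⊥) (hγ : 0 < γ) {x₀ x : E}
    (hx₀ : R x₀ ≠ ⊤) (hx : ∀ y, proxObjective R γ T w x ≤ proxObjective R γ T w y) :
    x ∈ {y | R y ≠ ⊤} ∧
      IsMinOn (fun y => γ * (R y).toReal + 1 / 2 * ‖T y - w‖ ^ 2) {y | R y ≠ ⊤} x := by
  have hxtop : R x ≠ ⊤ := by
    intro htop
    have h := hx x₀
    rw [proxObjective_eq_coe hbot hx₀, proxObjective, htop,
      EReal.mul_top_of_pos (by exact_mod_cast hγ), EReal.top_add_coe, top_le_iff] at h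
    exact EReal.coe_ne_top _ h
  refine ⟨hxtop, fun y hy => ?_⟩
  have h := hx y
  rwa [proxObjective_eq_coe hbot hxtop, proxObjective_eq_coe hbot hy, EReal.coe_le_coe_iff] at h

theorem lowerSemicontinuous_proxObjective [TopologicalSpace E] (hR : LowerSemicontinuous R)
    (hγ : 0 < γ) (hT : Continuous T) : LowerSemicontinuous (proxObjective R γ T w) := by
  have hγ0 : (γ : EReal) ≠ 0 := by exact_mod_cast hγ.ne'
  have hmul : Continuous fun e : EReal => (γ : EReal) * e :=
    continuous_iff_continuousAt.2 fun e => (EReal.continuousAt_mul (.inl hγ0) (.inl hγ0)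
      (.inl (EReal.coe_ne_bot γ)) (.inl (EReal.coe_ne_top γ))).comp
      (continuous_const.prodMk continuous_id).continuousAt
  have hmono : Monotone fun e : EReal => (γ : EReal) * e :=
    fun a b hab => mul_le_mul_of_nonneg_left hab (by exact_mod_cast hγ.le)
  refine LowerSemicontinuous.add' (hmul.comp_lowerSemicontinuous hR hmono)
    (continuous_coe_real_ereal.comp (by fun_prop)).lowerSemicontinuous fun x =>
      EReal.continuousAt_add (.inr (EReal.coe_ne_bot _)) (.inr (EReal.coe_ne_top _))
end ProxObjective

theorem norm_map_sub_le_of_forall_proxObjective_le {E F : Type*} [AddCommGroup E] [Module ℝ E]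
    [NormedAddCommGroup F] [InnerProductSpace ℝ F] {R : E → EReal} {γ : ℝ} {T : E →ₗ[ℝ] F}
    (hconv : ConvexOn ℝ {x | R x ≠ ⊤} (fun x => (R x).toReal)) (hbot : ∀ x, R x ≠ ⊥)
    (hγ : 0 < γ) {x₀ : E} (hx₀ : R x₀ ≠ ⊤) {w₁ w₂ : F} {x₁ x₂ : E}
    (h₁ : ∀ y, proxObjective R γ T w₁ x₁ ≤ proxObjective R γ T w₁ y)
    (h₂ : ∀ y, proxObjective R γ T w₂ x₂ ≤ proxObjective R γ T w₂ y) :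
    ‖T x₁ - T x₂‖ ≤ ‖w₁ - w₂‖ := by
  obtain ⟨hx₁, hmin₁⟩ := isMinOn_of_forall_proxObjective_le hbot hγ hx₀ h₁
  obtain ⟨hx₂, hmin₂⟩ := isMinOn_of_forall_proxObjective_le hbot hγ hx₀ h₂
  exact (hconv.smul hγ.le).norm_map_sub_le_of_isMinOn T hx₁ hx₂ hmin₁ hmin₂

theorem LowerSemicontinuous.exists_forall_le' {α β : Type*} [TopologicalSpace α] [LinearOrder β]
    {f : α → β} (hf : LowerSemicontinuous f) (x₀ : α) (h : ∀ᶠ x in cocompact α, f x₀ ≤ f x) :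
    ∃ x, ∀ y, f x ≤ f y := by
  obtain ⟨K, hK, hKf⟩ := hasBasis_cocompact.eventually_iff.1 h
  obtain ⟨x, -, hx⟩ := LowerSemicontinuousOn.exists_isMinOn (Set.insert_nonempty x₀ K)
    (hK.insert x₀) (hf.lowerSemicontinuousOn _)
  refine ⟨x, fun y => ?_⟩
  by_cases hy : y ∈ K
  exacts [hx (Or.inr hy), (hx (Or.inl rfl)).trans (hKf hy)]

section Existence
variable {E F : Type*} [NormedAddCommGroup E] [NormedSpace ℝ E] [NormedAddCommGroup F]
  [NormedSpace ℝ F] {R : E → EReal} {γ : ℝ} {T : E →ₗ[ℝ] F}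

theorem exists_sub_mul_norm_le_of_convexOn [ProperSpace E]
    (hconv : ConvexOn ℝ {x | R x ≠ ⊤} (fun x => (R x).toReal)) (hR : LowerSemicontinuous R)
    (hbot : ∀ x, R x ≠ ⊥) {x₀ : E} (hx₀ : R x₀ ≠ ⊤) :
    ∃ a b : ℝ, ∀ x, ((a - b * ‖x‖ : ℝ) : EReal) ≤ R x := by
  obtain ⟨z₀, -, hz₀⟩ := LowerSemicontinuousOn.exists_isMinOn
    ⟨x₀, Metric.mem_closedBall_self zero_le_one⟩ (isCompact_closedBall x₀ 1)
    (hR.lowerSemicontinuousOn _)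
  set c := (R z₀).toReal
  set r₀ := (R x₀).toReal
  have hc : ∀ z ∈ Metric.closedBall x₀ 1, R z ≠ ⊤ → c ≤ (R z).toReal := fun z hz hz' =>
    EReal.toReal_le_toReal (hz₀ hz) (hbot z₀) hz'
  have hcr₀ : c ≤ r₀ := hc x₀ (Metric.mem_closedBall_self zero_le_one) hx₀
  have key : ∀ x, R x ≠ ⊤ → c - (r₀ - c) * ‖x - x₀‖ ≤ (R x).toReal := by
    intro x hx
    by_cases hs : ‖x - x₀‖ ≤ 1
    · have := hc x (mem_closedBall_iff_norm.2 hs) hx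
      nlinarith [norm_nonneg (x - x₀)]
    set s := ‖x - x₀‖
    have hs1 : 1 < s := not_le.1 hs
    have hs0 : 0 < s := one_pos.trans hs1
    set t := s⁻¹
    have ht : t * s = 1 := inv_mul_cancel₀ hs0.ne'
    have ht1 : t ≤ 1 := inv_le_one_of_one_le₀ hs1.le
    have hzx₀ : t • x + (1 - t) • x₀ - x₀ = t • (x - x₀) := by module
    have hz : t • x + (1 - t) • x₀ ∈ Metric.closedBall x₀ 1 := by
      rw [mem_closedBall_iff_norm, hzx₀, norm_smul, Real.norm_of_nonneg (by positivity), ht]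
    have ht0 : 0 ≤ t := by positivity
    have ht1' : 0 ≤ 1 - t := by linarith
    have hconvz := hconv.2 hx hx₀ ht0 ht1' (add_sub_cancel t 1)
    have hcz := (hc _ hz (hconv.1 hx hx₀ ht0 ht1' (add_sub_cancel t 1))).trans hconvz
    simp only [smul_eq_mul] at hcz
    have := mul_le_mul_of_nonneg_right hcz hs0.le
    have hts : (t * (R x).toReal + (1 - t) * r₀) * s = (R x).toReal + (s - 1) * r₀ := by
      linear_combination ((R x).toReal - r₀) * ht
    nlinarith
  refine ⟨c - (r₀ - c) * ‖x₀‖, r₀ - c, fun x => ?_⟩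
  rcases eq_or_ne (R x) ⊤ with hx | hx
  · simp [hx]
  rw [← EReal.coe_toReal hx (hbot x), EReal.coe_le_coe_iff]
  nlinarith [key x hx, norm_sub_le x x₀]

theorem eventually_le_proxObjective_cocompact [FiniteDimensional ℝ E]
    (hT : Function.Injective T) (hγ : 0 < γ) {a b : ℝ}
    (hR : ∀ x, ((a - b * ‖x‖ : ℝ) : EReal) ≤ R x) (w : F) (c : ℝ) :
    ∀ᶠ x in cocompact E, (c : EReal) ≤ proxObjective R γ T w x := by
  obtain ⟨m, hm, hTm⟩ := antilipschitzWith_iff_exists_mul_le_norm.1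
    (((LinearMap.injective_iff_antilipschitz T).1 hT).imp fun _ h => h.2)
  set φ : ℝ → ℝ := fun s => γ * (a - b * s) + 1 / 2 * ((m * s) ^ 2 / 2 - ‖w‖ ^ 2)
  have hφ : Tendsto φ atTop atTop := by
    have hφ_eq : φ = fun s => (m ^ 2 / 4 * s - γ * b) * s + (γ * a - ‖w‖ ^ 2 / 2) := by
      funext s; ring
    rw [hφ_eq]
    refine tendsto_atTop_add_const_right _ _ (Tendsto.atTop_mul_atTop₀ ?_ tendsto_id)
    exact tendsto_atTop_add_const_right _ _ (tendsto_id.const_mul_atTop (by positivity))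
  have hbound : ∀ x, (φ ‖x‖ : EReal) ≤ proxObjective R γ T w x := by
    intro x
    have hquad : (m * ‖x‖) ^ 2 / 2 - ‖w‖ ^ 2 ≤ ‖T x - w‖ ^ 2 := by
      have h₁ := pow_le_pow_left₀ (by positivity) (hTm x) 2
      have h₂ : ‖T x‖ ≤ ‖T x - w‖ + ‖w‖ := by linarith [norm_sub_norm_le (T x) w]
      have h₃ := pow_le_pow_left₀ (norm_nonneg _) h₂ 2
      nlinarith [sq_nonneg (‖T x - w‖ - ‖w‖)]
    rw [proxObjective, EReal.coe_add, EReal.coe_mul]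
    refine add_le_add (mul_le_mul_of_nonneg_left (hR x) (by exact_mod_cast hγ.le)) ?_
    exact_mod_cast mul_le_mul_of_nonneg_left hquad (by norm_num)
  filter_upwards [(hφ.comp tendsto_norm_cocompact_atTop).eventually_ge_atTop c] with x hx
  exact (EReal.coe_le_coe_iff.2 hx).trans (hbound x)

theorem exists_forall_proxObjective_le [FiniteDimensional ℝ E]
    (hconv : ConvexOn ℝ {x | R x ≠ ⊤} (fun x => (R x).toReal)) (hR : LowerSemicontinuous R)
    (hbot : ∀ x, R x ≠ ⊥) {x₀ : E} (hx₀ : R x₀ ≠ ⊤) (hT : Function.Injective T) (hγ : 0 < γ)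
    (w : F) : ∃ x, ∀ y, proxObjective R γ T w x ≤ proxObjective R γ T w y := by
  have : ProperSpace E := FiniteDimensional.proper_real E
  obtain ⟨a, b, hab⟩ := exists_sub_mul_norm_le_of_convexOn hconv hR hbot hx₀
  refine (lowerSemicontinuous_proxObjective hR hγ
    T.continuous_of_finiteDimensional).exists_forall_le' x₀ ?_
  have hfin : proxObjective R γ T w x₀ ≠ ⊤ := by
    rw [proxObjective_eq_coe hbot hx₀]; exact EReal.coe_ne_top _
  filter_upwards [eventually_le_proxObjective_cocompact hT hγ hab w
    (proxObjective R γ T w x₀).toReal] with x hx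
  exact (EReal.le_coe_toReal hfin).trans hx
end Existence

section Matrix
variable {m n : Type*} [Fintype m] [Fintype n]

theorem euclNorm_nonneg (x : n → ℝ) : 0 ≤ euclNorm x := Real.sqrt_nonneg _

theorem euclNorm_eq_norm_toLp (x : n → ℝ) :
    euclNorm x = ‖(WithLp.toLp 2 x : EuclideanSpace ℝ n)‖ := by
  simp [euclNorm, EuclideanSpace.norm_eq]

theorem euclNorm_sq (x : n → ℝ) : euclNorm x ^ 2 = x ⬝ᵥ x := by
  rw [euclNorm, Real.sq_sqrt (Finset.sum_nonneg fun i _ => sq_nonneg (x i))]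
  simp only [dotProduct, sq]

noncomputable def euclMulVecLin (A : Matrix m n ℝ) : (n → ℝ) →ₗ[ℝ] EuclideanSpace ℝ m :=
  (WithLp.linearEquiv 2 ℝ (m → ℝ)).symm.toLinearMap ∘ₗ A.mulVecLin

theorem norm_euclMulVecLin (A : Matrix m n ℝ) (x : n → ℝ) :
    ‖euclMulVecLin A x‖ = euclNorm (A *ᵥ x) := by
  rw [euclNorm_eq_norm_toLp]
  rfl

theorem norm_euclMulVecLin_sub (A : Matrix m n ℝ) (x : n → ℝ) (w : m → ℝ) :
    ‖euclMulVecLin A x - WithLp.toLp 2 w‖ = euclNorm (A *ᵥ x - w) := by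
  rw [euclNorm_eq_norm_toLp, WithLp.toLp_sub]
  rfl

variable [DecidableEq n]

open scoped Matrix.Norms.L2Operator in
theorem matOpNorm_eq_l2_opNorm (A : Matrix m n ℝ) : matOpNorm A = ‖A‖ := by
  rw [l2_opNorm_def, ← ContinuousLinearMap.sSup_unitClosedBall_eq_norm, matOpNorm]
  congr 1
  ext t
  simp only [Set.mem_ofPred_eq, Set.mem_image, Metric.mem_closedBall, dist_zero_right]
  constructor
  · rintro ⟨x, hx, rfl⟩
    refine ⟨WithLp.toLp 2 x, ?_, ?_⟩
    · rwa [← euclNorm_eq_norm_toLp]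
    · simp [euclNorm_eq_norm_toLp]
  · rintro ⟨x, hx, rfl⟩
    refine ⟨x.ofLp, ?_, ?_⟩
    · simpa [euclNorm_eq_norm_toLp] using hx
    · rw [euclNorm_eq_norm_toLp]; rfl

open scoped Matrix.Norms.L2Operator in
theorem euclNorm_mulVec_le (A : Matrix m n ℝ) (x : n → ℝ) :
    euclNorm (A *ᵥ x) ≤ matOpNorm A * euclNorm x := by
  rw [matOpNorm_eq_l2_opNorm, euclNorm_eq_norm_toLp, euclNorm_eq_norm_toLp]
  exact A.l2_opNorm_mulVec (WithLp.toLp 2 x)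

theorem pos_of_mem_spectrum_transpose_mul_self {A : Matrix m n ℝ}
    (hA : Function.Injective A.mulVecLin) {κ : ℝ} (hκ : κ ∈ spectrum ℝ (Aᵀ * A)) : 0 < κ := by
  have hpos : (Aᵀ * A).PosDef := by
    simpa [conjTranspose_eq_transpose_of_trivial] using PosDef.conjTranspose_mul_self A hA
  obtain ⟨i, rfl⟩ := hpos.isHermitian.spectrum_real_eq_range_eigenvalues ▸ hκ
  exact hpos.eigenvalues_pos i

theorem mul_euclNorm_sq_le_of_mem_lowerBounds_spectrum {A : Matrix m n ℝ} {κ : ℝ}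
    (hκ : κ ∈ lowerBounds (spectrum ℝ (Aᵀ * A))) (v : n → ℝ) :
    κ * euclNorm v ^ 2 ≤ euclNorm (A *ᵥ v) ^ 2 := by
  have hherm : (Aᵀ * A).IsHermitian := by
    simpa [conjTranspose_eq_transpose_of_trivial] using isHermitian_conjTranspose_mul_self A
  have hpsd : (Aᵀ * A - algebraMap ℝ _ κ).PosSemidef := by
    refine posSemidef_iff_isHermitian_and_spectrum_nonneg.2 ⟨hherm.sub ?_, ?_⟩
    · simp [algebraMap_eq_diagonal]
    · rw [← spectrum.sub_singleton_eq]
      rintro _ ⟨μ, hμ, _, rfl, rfl⟩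
      exact sub_nonneg.2 (hκ hμ)
  have := hpsd.dotProduct_mulVec_nonneg v
  rw [Algebra.algebraMap_eq_smul_one, star_trivial, sub_mulVec, smul_mulVec, one_mulVec,
    dotProduct_sub, dotProduct_smul, ← mulVec_mulVec, dotProduct_mulVec, vecMul_transpose,
    smul_eq_mul, sub_nonneg] at this
  rwa [euclNorm_sq, euclNorm_sq]

theorem euclNorm_le_of_euclNorm_mulVec_le {A : Matrix m n ℝ}
    (hA : Function.Injective A.mulVecLin) {κ : ℝ} (hκ : IsLeast (spectrum ℝ (Aᵀ * A)) κ)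
    {v : n → ℝ} {δ : ℝ}
    (h : euclNorm (A *ᵥ v) ≤ δ) : euclNorm v ≤ matOpNorm A / κ * δ := by
  have hκ0 := pos_of_mem_spectrum_transpose_mul_self hA hκ.1
  have hray := mul_euclNorm_sq_le_of_mem_lowerBounds_spectrum hκ.2 v
  have hop := euclNorm_mulVec_le A v
  have hAv := euclNorm_nonneg (A *ᵥ v)
  have hN : 0 ≤ matOpNorm A := Real.sSup_nonneg fun _ ⟨_, _, ht⟩ => ht ▸ euclNorm_nonneg _
  rw [div_mul_eq_mul_div, le_div_iff₀ hκ0]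
  rcases (euclNorm_nonneg v).eq_or_lt with hv | hv
  · rw [← hv, zero_mul]
    exact mul_nonneg hN (hAv.trans h)
  · nlinarith [mul_le_mul h hop hAv (hAv.trans h)]
end Matrix

/-- For a proper convex lower semi-continuous `R` and `A` of full column rank, the
generalized proximal problem `min_x γ R(x) + ½‖Ax − w‖²` has a unique minimizer for
each `w`, and the minimizer map is Lipschitz with constant `‖A‖/κ`, where `κ > 0` is
the smallest eigenvalue of `AᵀA`. -/
theorem stmt18 {p n : ℕ}
    (R : (Fin n → ℝ) → EReal)
    (hRconv : ∀ x y : Fin n → ℝ, ∀ t : ℝ, t ∈ Set.Icc (0 : ℝ) 1 →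
        R (t • x + (1 - t) • y) ≤ (t : EReal) * R x + ((1 - t : ℝ) : EReal) * R y)
    (hRlsc : LowerSemicontinuous R)
    (hRne_bot : ∀ x, R x ≠ ⊥) (hRproper : ∃ x, R x ≠ ⊤)
    (A : Matrix (Fin p) (Fin n) ℝ) (hA : Function.Injective A.mulVecLin)
    (γ : ℝ) (hγ : 0 < γ)
    (κ : ℝ) (hκ : IsLeast {t : ℝ | t ∈ spectrum ℝ (Aᵀ * A)} κ) :
    0 < κ ∧
    (∀ w : Fin p → ℝ, ∃! xh : Fin n → ℝ, ∀ x : Fin n → ℝ,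
      (γ : EReal) * R xh + (((1 : ℝ) / 2 * euclNorm (A.mulVec xh - w) ^ 2 : ℝ) : EReal) ≤
      (γ : EReal) * R x + (((1 : ℝ) / 2 * euclNorm (A.mulVec x - w) ^ 2 : ℝ) : EReal)) ∧
    (∀ w₁ w₂ x₁ x₂ : _,
      (∀ x : Fin n → ℝ,
        (γ : EReal) * R x₁ + (((1 : ℝ) / 2 * euclNorm (A.mulVec x₁ - w₁) ^ 2 : ℝ) : EReal) ≤
        (γ : EReal) * R x + (((1 : ℝ) / 2 * euclNorm (A.mulVec x - w₁) ^ 2 : ℝ) : EReal)) →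
      (∀ x : Fin n → ℝ,
        (γ : EReal) * R x₂ + (((1 : ℝ) / 2 * euclNorm (A.mulVec x₂ - w₂) ^ 2 : ℝ) : EReal) ≤
        (γ : EReal) * R x + (((1 : ℝ) / 2 * euclNorm (A.mulVec x - w₂) ^ 2 : ℝ) : EReal)) →
      euclNorm (x₁ - x₂) ≤ (matOpNorm A / κ) * euclNorm (w₁ - w₂)) := by
  have hobj : ∀ w x,
      (γ : EReal) * R x + (((1 : ℝ) / 2 * euclNorm (A *ᵥ x - w) ^ 2 : ℝ) : EReal)
        = proxObjective R γ (euclMulVecLin A) (WithLp.toLp 2 w) x := fun w x => by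
    rw [proxObjective, norm_euclMulVecLin_sub]
  simp only [hobj]
  obtain ⟨x₀, hx₀⟩ := hRproper
  have hconv := convexOn_toReal_of_ereal hRconv hRne_bot
  have hT : Function.Injective (euclMulVecLin A) :=
    (WithLp.linearEquiv 2 ℝ (Fin p → ℝ)).symm.injective.comp hA
  refine ⟨pos_of_mem_spectrum_transpose_mul_self hA hκ.1, fun w => ?_,
    fun w₁ w₂ x₁ x₂ h₁ h₂ => ?_⟩
  · obtain ⟨x, hx⟩ := exists_forall_proxObjective_le hconv hRlsc hRne_bot hx₀ hT hγ
      (WithLp.toLp 2 w)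
    refine ⟨x, hx, fun y hy => hT ?_⟩
    simpa [sub_eq_zero] using
      norm_map_sub_le_of_forall_proxObjective_le hconv hRne_bot hγ hx₀ hy hx
  · refine euclNorm_le_of_euclNorm_mulVec_le hA hκ ?_
    have := norm_map_sub_le_of_forall_proxObjective_le hconv hRne_bot hγ hx₀ h₁ h₂
    rwa [← map_sub, norm_euclMulVecLin, ← WithLp.toLp_sub, ← euclNorm_eq_norm_toLp] at this
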